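/- arXiv:1111.0655 — 2 statements merged into one kernel-verified Lean document; each statement's English description precedes it below -/
import Mathlib

section
/- For p prime and a transitive solvable subgroup G of S_p, every nontrivial element of G fixes at most one point of {0,...,p-1}. -/
/-!
The last nontrivial term `N` of the derived series is an abelian normal subgroup. An action of
prime degree is primitive, so `N` is transitive; being abelian, it then acts regularly and has
order `p`. If `g` fixes `x` and `n • x` with `1 ≠ n ∈ N`, then `g n g⁻¹` and `n` agree at `x`,
so `g` commutes with `n`, hence with `N = ⟨n⟩`, and as `N` is transitive `g` acts trivially.
-/

theorem Group.IsSolvable.exists_normal_ne_bot_isMulCommutative {G : Type*} [Group G]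
    [Group.IsSolvable G] [Nontrivial G] :
    ∃ N : Subgroup G, N.Normal ∧ N ≠ ⊥ ∧ IsMulCommutative N := by
  classical
  have hex : ∃ n, derivedSeries G (n + 1) = ⊥ := by
    obtain ⟨n, hn⟩ := Group.IsSolvable.solvable (G := G)
    exact ⟨n, eq_bot_iff.mpr (hn ▸ derivedSeries_antitone G n.le_succ)⟩
  refine ⟨derivedSeries G (Nat.find hex), derivedSeries_normal _ _, ?_, ?_⟩
  · cases h : Nat.find hex with
    | zero => simp [derivedSeries_zero]
    | succ k => exact Nat.find_min hex (h ▸ k.lt_succ_self)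
  · rw [← Subgroup.commutator_self_eq_bot_iff, ← derivedSeries_succ]
    exact Nat.find_spec hex

namespace MulAction

variable {G α : Type*} [Group G] [MulAction G α]

theorem eq_one_of_smul_eq_of_forall_smul_comm [FaithfulSMul G α] {M : Type*} [Monoid M]
    [MulAction M α] [IsPretransitive M α] {g : G} {x : α} (hx : g • x = x)
    (hg : ∀ (m : M) (z : α), g • m • z = m • g • z) : g = 1 := by
  refine eq_of_smul_eq_smul (α := α) fun z ↦ ?_
  obtain ⟨m, rfl⟩ := exists_smul_eq M x z
  rw [hg, hx, one_smul]

theorem IsPretransitive.stabilizer_eq_bot_of_isMulCommutative [FaithfulSMul G α]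
    [IsPretransitive G α] [IsMulCommutative G] (x : α) : stabilizer G x = ⊥ :=
  (Subgroup.eq_bot_iff_forall _).mpr fun g hg ↦
    eq_one_of_smul_eq_of_forall_smul_comm (M := G) hg fun m z ↦ by
      rw [smul_smul, smul_smul, mul_comm']

theorem commute_of_smul_eq_of_stabilizer_eq_bot {N : Subgroup G} [N.Normal] {x : α}
    (hN : stabilizer N x = ⊥) {g n : G} (hn : n ∈ N) (hx : g • x = x)
    (hnx : g • n • x = n • x) : Commute g n := by
  have hc : n⁻¹ * (g * n * g⁻¹) ∈ N :=
    N.mul_mem (N.inv_mem hn) (Subgroup.Normal.conj_mem ‹_› n hn g)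
  have hcx : (⟨_, hc⟩ : N) ∈ stabilizer N x := by
    have hx' : g⁻¹ • x = x := inv_smul_eq_iff.mpr hx.symm
    simp [mul_smul, hx', hnx]
  rw [hN, Subgroup.mem_bot, Subtype.ext_iff, Subgroup.coe_one, inv_mul_eq_one] at hcx
  exact mul_inv_eq_iff_eq_mul.mp hcx.symm

theorem fixedPoints_ne_univ {M : Type*} [Monoid M] [MulAction M α] [FaithfulSMul M α]
    [Nontrivial M] : fixedPoints M α ≠ Set.univ := by
  intro h
  obtain ⟨m, hm⟩ := exists_ne (1 : M)
  refine hm (eq_of_smul_eq_smul (α := α) fun z ↦ ?_)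
  rw [one_smul]
  exact mem_fixedPoints.mp (h ▸ Set.mem_univ z) m

theorem IsPretransitive.card_eq_of_stabilizer_eq_bot {M : Type*} [Group M] [MulAction M α]
    [IsPretransitive M α] {x : α} (h : stabilizer M x = ⊥) : Nat.card M = Nat.card α := by
  rw [← index_stabilizer_of_transitive M x, h, Subgroup.index_bot]

theorem subsingleton_fixedBy_of_normal [FaithfulSMul G α] {N : Subgroup G} [N.Normal]
    [IsPretransitive N α] (hN : ∀ x : α, stabilizer N x = ⊥) (hp : (Nat.card α).Prime)
    {g : G} (hg : g ≠ 1) : (fixedBy α g).Subsingleton := by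
  intro x hx y hy
  by_contra hxy
  obtain ⟨n, rfl⟩ := exists_smul_eq N x y
  have hn : n ≠ 1 := by
    rintro rfl
    exact hxy (one_smul _ _).symm
  have : Fact (Nat.card N).Prime := ⟨IsPretransitive.card_eq_of_stabilizer_eq_bot (hN x) ▸ hp⟩
  have hgN : ∀ m : N, Commute g m := by
    intro m
    obtain ⟨k, rfl⟩ := Subgroup.mem_zpowers_iff.mp
      ((zpowers_eq_top_of_prime_card rfl hn).symm ▸ Subgroup.mem_top m)
    simpa using (commute_of_smul_eq_of_stabilizer_eq_bot (hN x) n.2 hx hy).zpow_right k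
  exact hg (eq_one_of_smul_eq_of_forall_smul_comm (M := N) hx fun m z ↦ by
    rw [Subgroup.smul_def, Subgroup.smul_def, smul_smul, smul_smul, hgN m])

theorem subsingleton_fixedBy_of_isSolvable [FaithfulSMul G α] [IsPretransitive G α]
    [Group.IsSolvable G] (hp : (Nat.card α).Prime) {g : G} (hg : g ≠ 1) :
    (fixedBy α g).Subsingleton := by
  have : Nontrivial G := ⟨⟨g, 1, hg⟩⟩
  obtain ⟨N, _, hN, _⟩ := Group.IsSolvable.exists_normal_ne_bot_isMulCommutative (G := G)
  have : Nontrivial N := N.nontrivial_iff_ne_bot.mpr hN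
  have : IsPreprimitive G α := .of_prime_card hp
  have : IsPretransitive N α := IsQuasiPreprimitive.isPretransitive_of_normal fixedPoints_ne_univ
  exact subsingleton_fixedBy_of_normal (N := N)
    IsPretransitive.stabilizer_eq_bot_of_isMulCommutative hp hg

end MulAction

/-- For `p` prime and a transitive solvable subgroup `G` of the symmetric group on `p`
points, every nontrivial element of `G` fixes at most one point. -/
theorem stmt_4 (p : ℕ) (hp : p.Prime) (G : Subgroup (Equiv.Perm (Fin p)))
    (htrans : ∀ x y : Fin p, ∃ g ∈ G, g x = y) (hsolv : IsSolvable G) :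
    ∀ g ∈ G, g ≠ 1 → ∀ x y : Fin p, g x = x → g y = y → x = y := by
  intro g hg hg1 x y hx hy
  have : MulAction.IsPretransitive G (Fin p) :=
    ⟨fun x y ↦ let ⟨g, hg, hgxy⟩ := htrans x y; ⟨⟨g, hg⟩, hgxy⟩⟩
  have : Group.IsSolvable G := hsolv
  have hg1' : (⟨g, hg⟩ : G) ≠ 1 := by simpa using hg1
  exact MulAction.subsingleton_fixedBy_of_isSolvable (by simpa using hp) hg1' hx hy
end

section
/- The angle π/3 cannot be trisected with ruler and compass; equivalently, cos(20°) is not a constructible real number. -/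
/-!
Every constructible number lies in a tower `ℚ = K₀ ≤ K₁ ≤ ⋯ ≤ Kₙ` with `Kᵢ₊₁ = Kᵢ(√aᵢ)`, so
`[Kₙ : ℚ] = 2 ^ m` and the degree of its minimal polynomial is a power of two. But
`cos 3θ = 4 cos³ θ - 3 cos θ` with `θ = π / 9` shows that `2 cos (π / 9)` is a root of
`X³ - 3X - 1`, which has no rational root (the only candidates are `±1`) and is therefore
irreducible of degree `3`.
-/

/-- A complex number is constructible (by ruler and compass) if it can be obtained from
the rationals by field operations and extraction of square roots. -/
inductive IsConstructible : ℂ → Prop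
  | base (q : ℚ) : IsConstructible (q : ℂ)
  | add {z w : ℂ} : IsConstructible z → IsConstructible w → IsConstructible (z + w)
  | neg {z : ℂ} : IsConstructible z → IsConstructible (-z)
  | mul {z w : ℂ} : IsConstructible z → IsConstructible w → IsConstructible (z * w)
  | inv {z : ℂ} : IsConstructible z → IsConstructible z⁻¹
  | sqrt {z : ℂ} : IsConstructible (z * z) → IsConstructible z

open IntermediateField Polynomial Module

section QuadraticTower

variable {F E : Type*} [Field F] [Field E] [Algebra F E]

lemma isIntegral_of_mul_self_mem {K : IntermediateField F E} {a : E} (ha : a * a ∈ K) :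
    IsIntegral K a :=
  ⟨X ^ 2 - C ⟨a * a, ha⟩, monic_X_pow_sub_C _ two_ne_zero, by simp [sq]⟩

lemma natDegree_minpoly_le_two_of_mul_self_mem {K : IntermediateField F E} {a : E}
    (ha : a * a ∈ K) : (minpoly K a).natDegree ≤ 2 := by
  set p : K[X] := X ^ 2 - C ⟨a * a, ha⟩
  have hpa : aeval a p = 0 := by simp [p, sq]
  calc (minpoly K a).natDegree ≤ p.natDegree :=
        natDegree_le_of_dvd (minpoly.dvd K a hpa) (monic_X_pow_sub_C _ two_ne_zero).ne_zero
    _ = 2 := natDegree_X_pow_sub_C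

variable (F) in
inductive IsQuadraticTower : IntermediateField F E → Prop
  | bot : IsQuadraticTower ⊥
  | adjoin {K : IntermediateField F E} {a : E} : IsQuadraticTower K → a * a ∈ K →
      IsQuadraticTower ((adjoin K {a}).restrictScalars F)

lemma IsQuadraticTower.finrank_eq_two_pow {K : IntermediateField F E}
    (hK : IsQuadraticTower F K) : ∃ n, finrank F K = 2 ^ n := by
  induction hK with
  | bot => exact ⟨0, by simp⟩
  | @adjoin K a _ ha ih =>
    obtain ⟨n, hn⟩ := ih
    have hint := isIntegral_of_mul_self_mem ha
    have hdeg := natDegree_minpoly_le_two_of_mul_self_mem ha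
    have htower : finrank F K * finrank K K⟮a⟯ = finrank F K⟮a⟯ := finrank_mul_finrank F K K⟮a⟯
    have hpos : 0 < finrank K K⟮a⟯ := by
      have := adjoin.finiteDimensional hint
      exact finrank_pos
    rw [adjoin.finrank hint] at htower hpos
    change ∃ m, finrank F K⟮a⟯ = 2 ^ m
    interval_cases (minpoly K a).natDegree
    · exact ⟨n, by rw [← htower, hn, mul_one]⟩
    · exact ⟨n + 1, by rw [← htower, hn, pow_succ]⟩

lemma IsQuadraticTower.natDegree_minpoly_eq_two_pow {K : IntermediateField F E}
    (hK : IsQuadraticTower F K) {x : E} (hx : x ∈ K) : ∃ n, (minpoly F x).natDegree = 2 ^ n := by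
  obtain ⟨n, hn⟩ := hK.finrank_eq_two_pow
  have : FiniteDimensional F K := Module.finite_of_finrank_pos (by rw [hn]; positivity)
  have hdvd := minpoly.degree_dvd (IsIntegral.of_finite F (⟨x, hx⟩ : K))
  rw [minpoly_eq, hn, Nat.dvd_prime_pow Nat.prime_two] at hdvd
  obtain ⟨m, -, hm⟩ := hdvd
  exact ⟨m, hm⟩

end QuadraticTower

-- Extending an arbitrary given tower `K` lets the induction avoid composita of towers.
lemma IsConstructible.exists_isQuadraticTower {z : ℂ} (hz : IsConstructible z)
    {K : IntermediateField ℚ ℂ} (hK : IsQuadraticTower ℚ K) :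
    ∃ M, IsQuadraticTower ℚ M ∧ K ≤ M ∧ z ∈ M := by
  induction hz generalizing K with
  | base q => exact ⟨K, hK, le_rfl, IntermediateField.algebraMap_mem K q⟩
  | add _ _ ihz ihw =>
    obtain ⟨M, hM, hKM, hz⟩ := ihz hK
    obtain ⟨N, hN, hMN, hw⟩ := ihw hM
    exact ⟨N, hN, hKM.trans hMN, add_mem (hMN hz) hw⟩
  | mul _ _ ihz ihw =>
    obtain ⟨M, hM, hKM, hz⟩ := ihz hK
    obtain ⟨N, hN, hMN, hw⟩ := ihw hM
    exact ⟨N, hN, hKM.trans hMN, mul_mem (hMN hz) hw⟩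
  | neg _ ih =>
    obtain ⟨M, hM, hKM, hz⟩ := ih hK
    exact ⟨M, hM, hKM, neg_mem hz⟩
  | inv _ ih =>
    obtain ⟨M, hM, hKM, hz⟩ := ih hK
    exact ⟨M, hM, hKM, inv_mem hz⟩
  | @sqrt z _ ih =>
    obtain ⟨M, hM, hKM, hz⟩ := ih hK
    exact ⟨_, hM.adjoin hz, fun x hx => (adjoin M {z}).algebraMap_mem ⟨x, hKM hx⟩,
      mem_adjoin_simple_self M z⟩

lemma IsConstructible.natDegree_minpoly_eq_two_pow {z : ℂ} (hz : IsConstructible z) :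
    ∃ n, (minpoly ℚ z).natDegree = 2 ^ n := by
  obtain ⟨K, hK, -, hzK⟩ := hz.exists_isQuadraticTower IsQuadraticTower.bot
  exact hK.natDegree_minpoly_eq_two_pow hzK

lemma Int.cube_sub_three_mul_sub_one_ne_zero (m : ℤ) : m ^ 3 - 3 * m - 1 ≠ 0 := by
  intro hm
  have hunit : IsUnit m := isUnit_of_dvd_one ⟨m ^ 2 - 3, by linear_combination -hm⟩
  rcases Int.isUnit_iff.mp hunit with rfl | rfl <;> norm_num at hm

lemma natDegree_cube_sub_three_mul_sub_one : (X ^ 3 - 3 * X - 1 : ℚ[X]).natDegree = 3 := by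
  compute_degree!

lemma irreducible_cube_sub_three_mul_sub_one : Irreducible (X ^ 3 - 3 * X - 1 : ℚ[X]) := by
  refine irreducible_of_degree_le_three_of_not_isRoot
    (by simp [natDegree_cube_sub_three_mul_sub_one]) fun x hx => ?_
  have aeval_eq (y : ℚ) : aeval y (X ^ 3 - C 3 * X - 1 : ℤ[X]) = y ^ 3 - 3 * y - 1 := by
    simp only [map_sub, map_mul, map_pow, aeval_X, aeval_C, map_one]; norm_num
  have hx : aeval x (X ^ 3 - C 3 * X - 1 : ℤ[X]) = 0 := by rw [aeval_eq]; simpa using hx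
  obtain ⟨m, rfl⟩ := isInteger_of_is_root_of_monic (by monicity!) hx
  exact Int.cube_sub_three_mul_sub_one_ne_zero m (by exact_mod_cast aeval_eq m ▸ hx)

open Real in
lemma aeval_two_mul_cos_pi_div_nine :
    aeval ((2 * cos (π / 9) : ℝ) : ℂ) (X ^ 3 - 3 * X - 1 : ℚ[X]) = 0 := by
  have h := cos_three_mul (π / 9)
  rw [show 3 * (π / 9) = π / 3 by ring, cos_pi_div_three] at h
  have hreal : (2 * cos (π / 9)) ^ 3 - 3 * (2 * cos (π / 9)) - 1 = 0 := by
    linear_combination -2 * h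
  simp only [map_sub, map_mul, map_pow, aeval_X, map_one, map_ofNat]
  exact_mod_cast congrArg Complex.ofReal hreal

/-- Wantzel: the angle `π/3` cannot be trisected with ruler and compass; equivalently,
`cos 20° = cos (π/9)` is not a constructible number. -/
theorem stmt_15 : ¬ IsConstructible ((Real.cos (Real.pi / 9) : ℝ) : ℂ) := by
  intro h
  set c : ℂ := ((2 * Real.cos (Real.pi / 9) : ℝ) : ℂ)
  have hc : IsConstructible c := by simpa [c, two_mul] using h.add h
  have hmin : minpoly ℚ c = X ^ 3 - 3 * X - 1 :=
    (minpoly.eq_of_irreducible_of_monic irreducible_cube_sub_three_mul_sub_one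
      aeval_two_mul_cos_pi_div_nine (by monicity!)).symm
  obtain ⟨n, hn⟩ := hc.natDegree_minpoly_eq_two_pow
  rw [hmin, natDegree_cube_sub_three_mul_sub_one] at hn
  cases n with
  | zero => norm_num at hn
  | succ n => rw [pow_succ] at hn; omega
end
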